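/- Let (λ, ρ, φ_λ, φ_ρ, φ_λρ) be a quasi-commuting pair of G-coactions on M for a quasi-Hopf algebra G, let γ : M → A be an algebra map, and let T ∈ G ⊗ A satisfy the λρ-intertwiner property T·λ_A(m) = ρ_A^op(m)·T for all m ∈ M (where λ_A = (id⊗γ)∘λ, ρ_A = (γ⊗id)∘ρ and op denotes the flipped image in G ⊗ A). Define B := (φ_ρ³¹²)_A·T¹³·(φ_λρ⁻¹)^{132}_A·T²³·(φ_λ)_A ∈ G ⊗ G ⊗ A. Then B·(Δ ⊗ id_A)(λ_A(m)) = (Δ ⊗ id_A)(ρ_A^op(m))·B for all m ∈ M. -/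

import Mathlib

open TensorProduct

set_option maxHeartbeats 1000000

noncomputable section

/-- A quasi-bialgebra structure (Drinfeld) on an algebra `G` over `ℂ`: algebra maps
`Δ : G → G ⊗ G` and `ε : G → ℂ`, together with an invertible reassociator
`φ ∈ G ⊗ G ⊗ G` satisfying quasi-coassociativity, the pentagon identity and the counit
axioms. -/
structure QuasiBialg (G : Type*) [Ring G] [Algebra ℂ G] where
  comul : G →ₐ[ℂ] G ⊗[ℂ] G
  counit : G →ₐ[ℂ] ℂ
  assocEl : G ⊗[ℂ] (G ⊗[ℂ] G)
  assocElInv : G ⊗[ℂ] (G ⊗[ℂ] G)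
  assocEl_mul_inv : assocEl * assocElInv = 1
  assocEl_inv_mul : assocElInv * assocEl = 1
  quasiCoassoc : ∀ a : G,
    TensorProduct.map LinearMap.id comul.toLinearMap (comul a) * assocEl =
      assocEl *
        (TensorProduct.assoc ℂ G G G)
          (TensorProduct.map comul.toLinearMap LinearMap.id (comul a))
  counit_comul_left : ∀ a : G,
    (TensorProduct.lid ℂ G)
      (TensorProduct.map counit.toLinearMap LinearMap.id (comul a)) = a
  counit_comul_right : ∀ a : G,
    (TensorProduct.rid ℂ G)
      (TensorProduct.map LinearMap.id counit.toLinearMap (comul a)) = a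
  counit_assocEl :
    TensorProduct.map LinearMap.id
        ((TensorProduct.lid ℂ G).toLinearMap ∘ₗ
          TensorProduct.map counit.toLinearMap LinearMap.id) assocEl =
      (1 : G ⊗[ℂ] G)
  pentagon :
    TensorProduct.map LinearMap.id
          (TensorProduct.map LinearMap.id comul.toLinearMap) assocEl *
        (TensorProduct.assoc ℂ G G (G ⊗[ℂ] G))
          (TensorProduct.map comul.toLinearMap LinearMap.id assocEl) =
      ((1 : G) ⊗ₜ[ℂ] assocEl) *
        TensorProduct.map LinearMap.id (TensorProduct.assoc ℂ G G G).toLinearMap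
          (TensorProduct.map LinearMap.id
            (TensorProduct.map comul.toLinearMap LinearMap.id) assocEl) *
        TensorProduct.map LinearMap.id (TensorProduct.assoc ℂ G G G).toLinearMap
          ((TensorProduct.assoc ℂ G (G ⊗[ℂ] G) G) (assocEl ⊗ₜ[ℂ] (1 : G)))

/-- A quasi-Hopf algebra structure (Drinfeld) on an algebra `G` over `ℂ`: a quasi-bialgebra
together with an invertible algebra antimorphism `S` and elements `α, β ∈ G` satisfying the
antipode axioms. -/
structure QuasiHopf (G : Type*) [Ring G] [Algebra ℂ G] extends QuasiBialg G where
  S : G →ₗ[ℂ] G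
  S_one : S 1 = 1
  S_mul : ∀ a b : G, S (a * b) = S b * S a
  Sinv : G →ₗ[ℂ] G
  Sinv_S : ∀ a : G, Sinv (S a) = a
  S_Sinv : ∀ a : G, S (Sinv a) = a
  alphaEl : G
  betaEl : G
  antipode_left : ∀ a : G,
    LinearMap.mul' ℂ G
        (TensorProduct.map (LinearMap.mulRight ℂ alphaEl ∘ₗ S) LinearMap.id (comul a)) =
      counit a • alphaEl
  antipode_right : ∀ a : G,
    LinearMap.mul' ℂ G
        (TensorProduct.map (LinearMap.mulRight ℂ betaEl) S (comul a)) =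
      counit a • betaEl
  antipode_assocEl :
    (LinearMap.mul' ℂ G ∘ₗ
        TensorProduct.map (LinearMap.mulRight ℂ betaEl)
          (LinearMap.mul' ℂ G ∘ₗ
            TensorProduct.map (LinearMap.mulRight ℂ alphaEl ∘ₗ S) LinearMap.id))
      assocEl = 1
  antipode_assocElInv :
    (LinearMap.mul' ℂ G ∘ₗ
        TensorProduct.map (LinearMap.mulRight ℂ alphaEl ∘ₗ S)
          (LinearMap.mul' ℂ G ∘ₗ
            TensorProduct.map (LinearMap.mulRight ℂ betaEl) S))
      assocElInv = 1

/-- A left coaction `(λ, φ_λ)` of a quasi-bialgebra `Q` on an algebra `M`: an algebra map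
`λ : M → G ⊗ M` with invertible reassociator `φ_λ ∈ G ⊗ G ⊗ M` satisfying the intertwining
relation, the mixed pentagon identity and the counit axioms. -/
structure LeftQCoaction (G M : Type*) [Ring G] [Algebra ℂ G] [Ring M] [Algebra ℂ M]
    (Q : QuasiBialg G) where
  lam : M →ₐ[ℂ] G ⊗[ℂ] M
  phiL : G ⊗[ℂ] (G ⊗[ℂ] M)
  phiLInv : G ⊗[ℂ] (G ⊗[ℂ] M)
  phiL_mul_inv : phiL * phiLInv = 1
  phiL_inv_mul : phiLInv * phiL = 1
  intertwine : ∀ m : M,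
    TensorProduct.map LinearMap.id lam.toLinearMap (lam m) * phiL =
      phiL *
        (TensorProduct.assoc ℂ G G M)
          (TensorProduct.map Q.comul.toLinearMap LinearMap.id (lam m))
  pentagon :
    ((1 : G) ⊗ₜ[ℂ] phiL) *
        TensorProduct.map LinearMap.id (TensorProduct.assoc ℂ G G M).toLinearMap
          (TensorProduct.map LinearMap.id
            (TensorProduct.map Q.comul.toLinearMap LinearMap.id) phiL) *
        TensorProduct.map LinearMap.id (TensorProduct.assoc ℂ G G M).toLinearMap
          ((TensorProduct.assoc ℂ G (G ⊗[ℂ] G) M) (Q.assocEl ⊗ₜ[ℂ] (1 : M))) =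
      TensorProduct.map LinearMap.id
          (TensorProduct.map LinearMap.id lam.toLinearMap) phiL *
        (TensorProduct.assoc ℂ G G (G ⊗[ℂ] M))
          (TensorProduct.map Q.comul.toLinearMap LinearMap.id phiL)
  counit_lam : ∀ m : M,
    (TensorProduct.lid ℂ M)
      (TensorProduct.map Q.counit.toLinearMap LinearMap.id (lam m)) = m
  counit_phiL_mid :
    TensorProduct.map LinearMap.id
        ((TensorProduct.lid ℂ M).toLinearMap ∘ₗ
          TensorProduct.map Q.counit.toLinearMap LinearMap.id) phiL =
      (1 : G ⊗[ℂ] M)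
  counit_phiL_left :
    (TensorProduct.lid ℂ (G ⊗[ℂ] M))
        (TensorProduct.map Q.counit.toLinearMap LinearMap.id phiL) =
      (1 : G ⊗[ℂ] M)

/-- A right coaction `(ρ, φ_ρ)` of a quasi-bialgebra `Q` on an algebra `M`: an algebra map
`ρ : M → M ⊗ G` with invertible reassociator `φ_ρ ∈ M ⊗ G ⊗ G` satisfying the intertwining
relation, the mixed pentagon identity and the counit axioms. -/
structure RightQCoaction (G M : Type*) [Ring G] [Algebra ℂ G] [Ring M] [Algebra ℂ M]
    (Q : QuasiBialg G) where
  rho : M →ₐ[ℂ] M ⊗[ℂ] G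
  phiR : M ⊗[ℂ] (G ⊗[ℂ] G)
  phiRInv : M ⊗[ℂ] (G ⊗[ℂ] G)
  phiR_mul_inv : phiR * phiRInv = 1
  phiR_inv_mul : phiRInv * phiR = 1
  intertwine : ∀ m : M,
    phiR *
        (TensorProduct.assoc ℂ M G G)
          (TensorProduct.map rho.toLinearMap LinearMap.id (rho m)) =
      TensorProduct.map LinearMap.id Q.comul.toLinearMap (rho m) * phiR
  pentagon :
    ((1 : M) ⊗ₜ[ℂ] Q.assocEl) *
        TensorProduct.map LinearMap.id (TensorProduct.assoc ℂ G G G).toLinearMap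
          (TensorProduct.map LinearMap.id
            (TensorProduct.map Q.comul.toLinearMap LinearMap.id) phiR) *
        TensorProduct.map LinearMap.id (TensorProduct.assoc ℂ G G G).toLinearMap
          ((TensorProduct.assoc ℂ M (G ⊗[ℂ] G) G) (phiR ⊗ₜ[ℂ] (1 : G))) =
      TensorProduct.map LinearMap.id
          (TensorProduct.map LinearMap.id Q.comul.toLinearMap) phiR *
        (TensorProduct.assoc ℂ M G (G ⊗[ℂ] G))
          (TensorProduct.map rho.toLinearMap LinearMap.id phiR)
  counit_rho : ∀ m : M,
    (TensorProduct.rid ℂ M)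
      (TensorProduct.map LinearMap.id Q.counit.toLinearMap (rho m)) = m
  counit_phiR_mid :
    TensorProduct.map LinearMap.id
        ((TensorProduct.lid ℂ G).toLinearMap ∘ₗ
          TensorProduct.map Q.counit.toLinearMap LinearMap.id) phiR =
      (1 : M ⊗[ℂ] G)
  counit_phiR_right :
    TensorProduct.map LinearMap.id
        ((TensorProduct.rid ℂ G).toLinearMap ∘ₗ
          TensorProduct.map LinearMap.id Q.counit.toLinearMap) phiR =
      (1 : M ⊗[ℂ] G)

variable {G M A : Type*} [Ring G] [Algebra ℂ G] [Ring M] [Algebra ℂ M]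
  [Ring A] [Algebra ℂ A]

/-- The element `B = (φ_ρ³¹²)_A · T¹³ · (φ_λρ⁻¹)¹³²_A · T²³ · (φ_λ)_A ∈ G ⊗ G ⊗ A`.  Here the
superscripts denote permutations of the tensor legs, and the subscript `A` means applying
`γ` to the `M`-leg. -/
def coherB (Q : QuasiHopf G)
    (L : LeftQCoaction G M Q.toQuasiBialg) (R : RightQCoaction G M Q.toQuasiBialg)
    (phiLRInv : G ⊗[ℂ] (M ⊗[ℂ] G)) (γ : M →ₐ[ℂ] A) (T : G ⊗[ℂ] A) :
    G ⊗[ℂ] (G ⊗[ℂ] A) :=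
  TensorProduct.map LinearMap.id (TensorProduct.map LinearMap.id γ.toLinearMap)
      ((TensorProduct.assoc ℂ G G M) ((TensorProduct.comm ℂ M (G ⊗[ℂ] G)) R.phiR)) *
    TensorProduct.map LinearMap.id (TensorProduct.mk ℂ G A (1 : G)) T *
    TensorProduct.map LinearMap.id
      (TensorProduct.map LinearMap.id γ.toLinearMap ∘ₗ
        (TensorProduct.comm ℂ M G).toLinearMap) phiLRInv *
    ((1 : G) ⊗ₜ[ℂ] T) *
    TensorProduct.map LinearMap.id (TensorProduct.map LinearMap.id γ.toLinearMap) L.phiL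

set_option synthInstance.maxHeartbeats 400000

/-- Permutation `(G ⊗ A) ⊗ G → G ⊗ G ⊗ A` swapping the last two legs. -/
def sigma23 : (G ⊗[ℂ] A) ⊗[ℂ] G →ₗ[ℂ] G ⊗[ℂ] (G ⊗[ℂ] A) :=
  TensorProduct.map LinearMap.id (TensorProduct.comm ℂ A G).toLinearMap ∘ₗ
    (TensorProduct.assoc ℂ G A G).toLinearMap

@[simp] lemma sigma23_tmul (u : G) (b : A) (g : G) :
    sigma23 ((u ⊗ₜ[ℂ] b) ⊗ₜ[ℂ] g) = u ⊗ₜ[ℂ] (g ⊗ₜ[ℂ] b) := rfl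

lemma chain5 {R : Type*} [Monoid R] (a b c d e x y x2 x3 x4 x5 : R)
    (h1 : e*x = x2*e) (h2 : d*x2 = x3*d) (h3 : c*x3 = x4*c)
    (h4 : b*x4 = x5*b) (h5 : a*x5 = y*a) :
    a*b*c*d*e*x = y*(a*b*c*d*e) := by
  calc a*b*c*d*e*x = a*(b*(c*(d*(e*x)))) := by simp only [mul_assoc]
  _ = a*(b*(c*(d*(x2*e)))) := by rw [h1]
  _ = a*(b*(c*((d*x2)*e))) := by rw [mul_assoc d x2 e]
  _ = a*(b*(c*((x3*d)*e))) := by rw [h2]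
  _ = a*(b*((c*x3)*(d*e))) := by rw [mul_assoc x3 d e, ← mul_assoc c x3 (d*e)]
  _ = a*(b*((x4*c)*(d*e))) := by rw [h3]
  _ = a*((b*x4)*(c*(d*e))) := by rw [mul_assoc x4 c (d*e), ← mul_assoc b x4 (c*(d*e))]
  _ = a*((x5*b)*(c*(d*e))) := by rw [h4]
  _ = (a*x5)*(b*(c*(d*e))) := by rw [mul_assoc x5 b (c*(d*e)), ← mul_assoc a x5 (b*(c*(d*e)))]
  _ = (y*a)*(b*(c*(d*e))) := by rw [h5]
  _ = y*(a*b*c*d*e) := by simp only [mul_assoc]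

lemma inv_swap {R : Type*} [Monoid R] (p q x y : R) (hpq : p*q = 1) (hqp : q*p = 1)
    (h : p*x = y*p) : q*y = x*q := by
  calc q*y = q*y*(p*q) := by rw [hpq, mul_one]
  _ = q*(y*p)*q := by rw [← mul_assoc, mul_assoc q y p]
  _ = q*(p*x)*q := by rw [h]
  _ = (q*p)*(x*q) := by rw [← mul_assoc, mul_assoc (q*p) x q]
  _ = x*q := by rw [hqp, one_mul]

lemma map_id_comp {P P' P'' : Type*} [AddCommMonoid P] [Module ℂ P] [AddCommMonoid P'] [Module ℂ P']
    [AddCommMonoid P''] [Module ℂ P''] (f : P →ₗ[ℂ] P') (g : P' →ₗ[ℂ] P'') (x : G ⊗[ℂ] P) :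
    TensorProduct.map LinearMap.id g (TensorProduct.map LinearMap.id f x) =
      TensorProduct.map LinearMap.id (g ∘ₗ f) x := by
  induction x using TensorProduct.induction_on with
  | zero => simp
  | tmul u p => simp
  | add u v hu hv => simp [hu, hv]

lemma commNat (γ' : M →ₗ[ℂ] A) (z : M ⊗[ℂ] G) :
    (TensorProduct.comm ℂ A G) (TensorProduct.map γ' LinearMap.id z) =
      TensorProduct.map LinearMap.id γ' ((TensorProduct.comm ℂ M G) z) := by
  induction z using TensorProduct.induction_on with
  | zero => simp
  | tmul a g => simp
  | add u v hu hv => simp [hu, hv]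

lemma assocNat (Δ' : G →ₗ[ℂ] G ⊗[ℂ] G) (γ' : M →ₗ[ℂ] A) (x : G ⊗[ℂ] M) :
    TensorProduct.map LinearMap.id (TensorProduct.map LinearMap.id γ')
        ((TensorProduct.assoc ℂ G G M) (TensorProduct.map Δ' LinearMap.id x)) =
      (TensorProduct.assoc ℂ G G A)
        (TensorProduct.map Δ' LinearMap.id (TensorProduct.map LinearMap.id γ' x)) := by
  induction x using TensorProduct.induction_on with
  | zero => simp
  | tmul g m =>
    simp only [map_tmul, LinearMap.id_coe, id_eq]
    induction Δ' g using TensorProduct.induction_on with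
    | zero => simp
    | tmul u v => simp
    | add u v hu hv => simp [add_tmul, hu, hv]
  | add u v hu hv => simp [hu, hv]

lemma s23_T_left (T y : G ⊗[ℂ] A) (g : G) :
    TensorProduct.map LinearMap.id (TensorProduct.mk ℂ G A 1) T * sigma23 (y ⊗ₜ[ℂ] g) =
      sigma23 ((T * y) ⊗ₜ[ℂ] g) := by
  induction T using TensorProduct.induction_on with
  | zero => simp [TensorProduct.zero_tmul]
  | tmul t₁ t₂ =>
    induction y using TensorProduct.induction_on with
    | zero => simp [TensorProduct.zero_tmul]
    | tmul u b => simp [Algebra.TensorProduct.tmul_mul_tmul]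
    | add y₁ y₂ ih₁ ih₂ => simp only [mul_add, TensorProduct.add_tmul, map_add, ih₁, ih₂]
  | add T₁ T₂ ih₁ ih₂ => simp only [map_add, add_mul, TensorProduct.add_tmul, ih₁, ih₂]

lemma s23_T_right (T y : G ⊗[ℂ] A) (g : G) :
    sigma23 (y ⊗ₜ[ℂ] g) * TensorProduct.map LinearMap.id (TensorProduct.mk ℂ G A 1) T =
      sigma23 ((y * T) ⊗ₜ[ℂ] g) := by
  induction T using TensorProduct.induction_on with
  | zero => simp [TensorProduct.zero_tmul]
  | tmul t₁ t₂ =>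
    induction y using TensorProduct.induction_on with
    | zero => simp [TensorProduct.zero_tmul]
    | tmul u b => simp [Algebra.TensorProduct.tmul_mul_tmul]
    | add y₁ y₂ ih₁ ih₂ => simp only [add_mul, TensorProduct.add_tmul, map_add, ih₁, ih₂]
  | add T₁ T₂ ih₁ ih₂ => simp only [map_add, mul_add, TensorProduct.add_tmul, ih₁, ih₂]

lemma step2_lemma (T : G ⊗[ℂ] A) (f g : M →ₗ[ℂ] G ⊗[ℂ] A)
    (h : ∀ m : M, T * f m = g m * T) (x : G ⊗[ℂ] M) :
    ((1:G) ⊗ₜ[ℂ] T) * TensorProduct.map LinearMap.id f x =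
      TensorProduct.map LinearMap.id g x * ((1:G) ⊗ₜ[ℂ] T) := by
  induction x using TensorProduct.induction_on with
  | zero => simp
  | tmul u m =>
    simp only [map_tmul, LinearMap.id_coe, id_eq, Algebra.TensorProduct.tmul_mul_tmul,
      one_mul, mul_one, h m]
  | add u v hu hv => simp only [map_add, add_mul, mul_add, hu, hv]

lemma step4_lemma (T : G ⊗[ℂ] A) (f g : M →ₗ[ℂ] G ⊗[ℂ] A)
    (h : ∀ m : M, T * f m = g m * T) (x : M ⊗[ℂ] G) :
    TensorProduct.map LinearMap.id (TensorProduct.mk ℂ G A 1) T *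
        sigma23 (TensorProduct.map f LinearMap.id x) =
      sigma23 (TensorProduct.map g LinearMap.id x) *
        TensorProduct.map LinearMap.id (TensorProduct.mk ℂ G A 1) T := by
  induction x using TensorProduct.induction_on with
  | zero => simp
  | tmul m g' =>
    simp only [map_tmul, LinearMap.id_coe, id_eq]
    rw [s23_T_left, h m, ← s23_T_right]
  | add u v hu hv => simp only [map_add, add_mul, mul_add, hu, hv]

lemma eX4_lemma (f : M →ₗ[ℂ] G ⊗[ℂ] M) (γ' : M →ₗ[ℂ] A) (x : M ⊗[ℂ] G) :
    TensorProduct.map LinearMap.id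
        (TensorProduct.map LinearMap.id γ' ∘ₗ (TensorProduct.comm ℂ M G).toLinearMap)
        ((TensorProduct.assoc ℂ G M G) (TensorProduct.map f LinearMap.id x)) =
      sigma23 (TensorProduct.map (TensorProduct.map LinearMap.id γ' ∘ₗ f) LinearMap.id x) := by
  induction x using TensorProduct.induction_on with
  | zero => simp
  | tmul a g =>
    simp only [map_tmul, LinearMap.id_coe, id_eq, LinearMap.comp_apply]
    induction f a using TensorProduct.induction_on with
    | zero => simp
    | tmul u v => simp
    | add u v hu hv => simp [add_tmul, hu, hv]
  | add u v hu hv => simp [hu, hv]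

lemma eX5_lemma (f : M →ₗ[ℂ] M ⊗[ℂ] G) (γ' : M →ₗ[ℂ] A) (x : M ⊗[ℂ] G) :
    TensorProduct.map LinearMap.id (TensorProduct.map LinearMap.id γ')
        ((TensorProduct.assoc ℂ G G M)
          ((TensorProduct.comm ℂ M (G ⊗[ℂ] G))
            ((TensorProduct.assoc ℂ M G G) (TensorProduct.map f LinearMap.id x)))) =
      sigma23 (TensorProduct.map
        ((TensorProduct.map LinearMap.id γ' ∘ₗ (TensorProduct.comm ℂ M G).toLinearMap) ∘ₗ f)
        LinearMap.id x) := by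
  induction x using TensorProduct.induction_on with
  | zero => simp
  | tmul a g =>
    simp only [map_tmul, LinearMap.id_coe, id_eq, LinearMap.comp_apply]
    induction f a using TensorProduct.induction_on with
    | zero => simp
    | tmul p q => simp
    | add u v hu hv => simp [add_tmul, hu, hv]
  | add u v hu hv => simp [hu, hv]

lemma eXrho_lemma (Δ' : G →ₗ[ℂ] G ⊗[ℂ] G) (γ' : M →ₗ[ℂ] A) (x : M ⊗[ℂ] G) :
    TensorProduct.map LinearMap.id (TensorProduct.map LinearMap.id γ')
        ((TensorProduct.assoc ℂ G G M)
          ((TensorProduct.comm ℂ M (G ⊗[ℂ] G))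
            (TensorProduct.map LinearMap.id Δ' x))) =
      (TensorProduct.assoc ℂ G G A)
        (TensorProduct.map Δ' LinearMap.id
          (TensorProduct.map LinearMap.id γ' ((TensorProduct.comm ℂ M G) x))) := by
  induction x using TensorProduct.induction_on with
  | zero => simp
  | tmul a g =>
    simp only [map_tmul, LinearMap.id_coe, id_eq, TensorProduct.comm_tmul]
    induction Δ' g using TensorProduct.induction_on with
    | zero => simp
    | tmul u v => simp
    | add u v hu hv => simp [tmul_add, add_tmul, hu, hv]
  | add u v hu hv => simp [hu, hv]


lemma psi1_mul (γ : M →ₐ[ℂ] A) (x y : G ⊗[ℂ] (G ⊗[ℂ] M)) :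
    TensorProduct.map LinearMap.id (TensorProduct.map LinearMap.id γ.toLinearMap) (x * y) =
      TensorProduct.map LinearMap.id (TensorProduct.map LinearMap.id γ.toLinearMap) x *
        TensorProduct.map LinearMap.id (TensorProduct.map LinearMap.id γ.toLinearMap) y :=
  map_mul (Algebra.TensorProduct.map (AlgHom.id ℂ G)
    (Algebra.TensorProduct.map (AlgHom.id ℂ G) γ)) x y

lemma psi3_mul (γ : M →ₐ[ℂ] A) (x y : G ⊗[ℂ] (M ⊗[ℂ] G)) :
    TensorProduct.map LinearMap.id
        (TensorProduct.map LinearMap.id γ.toLinearMap ∘ₗ (TensorProduct.comm ℂ M G).toLinearMap)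
        (x * y) =
      TensorProduct.map LinearMap.id
          (TensorProduct.map LinearMap.id γ.toLinearMap ∘ₗ (TensorProduct.comm ℂ M G).toLinearMap)
          x *
        TensorProduct.map LinearMap.id
          (TensorProduct.map LinearMap.id γ.toLinearMap ∘ₗ (TensorProduct.comm ℂ M G).toLinearMap)
          y :=
  map_mul (Algebra.TensorProduct.map (AlgHom.id ℂ G)
    ((Algebra.TensorProduct.map (AlgHom.id ℂ G) γ).comp
      (Algebra.TensorProduct.comm ℂ M G).toAlgHom)) x y

lemma psi5_mul (γ : M →ₐ[ℂ] A) (x y : M ⊗[ℂ] (G ⊗[ℂ] G)) :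
    TensorProduct.map LinearMap.id (TensorProduct.map LinearMap.id γ.toLinearMap)
        ((TensorProduct.assoc ℂ G G M) ((TensorProduct.comm ℂ M (G ⊗[ℂ] G)) (x * y))) =
      TensorProduct.map LinearMap.id (TensorProduct.map LinearMap.id γ.toLinearMap)
          ((TensorProduct.assoc ℂ G G M) ((TensorProduct.comm ℂ M (G ⊗[ℂ] G)) x)) *
        TensorProduct.map LinearMap.id (TensorProduct.map LinearMap.id γ.toLinearMap)
          ((TensorProduct.assoc ℂ G G M) ((TensorProduct.comm ℂ M (G ⊗[ℂ] G)) y)) :=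
  map_mul ((Algebra.TensorProduct.map (AlgHom.id ℂ G)
      (Algebra.TensorProduct.map (AlgHom.id ℂ G) γ)).comp
    (((Algebra.TensorProduct.assoc ℂ ℂ ℂ G G M).toAlgHom).comp
      (Algebra.TensorProduct.comm ℂ M (G ⊗[ℂ] G)).toAlgHom)) x y

/-- Let `(λ, ρ, φ_λ, φ_ρ, φ_λρ)` be a quasi-commuting pair of coactions of
a quasi-Hopf algebra `G` on `M`, `γ : M → A` an algebra map, and `T ∈ G ⊗ A` a
`λρ`-intertwiner, i.e. `T·λ_A(m) = ρ_A^op(m)·T` for all `m ∈ M`.  Put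
`B := (φ_ρ³¹²)_A · T¹³ · (φ_λρ⁻¹)¹³²_A · T²³ · (φ_λ)_A ∈ G ⊗ G ⊗ A`.  Then
`B·(Δ ⊗ id_A)(λ_A(m)) = (Δ ⊗ id_A)(ρ_A^op(m))·B` for all `m ∈ M`. -/
theorem statement19
    (Q : QuasiHopf G)
    (L : LeftQCoaction G M Q.toQuasiBialg) (R : RightQCoaction G M Q.toQuasiBialg)
    (phiLR phiLRInv : G ⊗[ℂ] (M ⊗[ℂ] G))
    (hLR_mul_inv : phiLR * phiLRInv = 1)
    (hLR_inv_mul : phiLRInv * phiLR = 1)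
    (hLR_intertwine : ∀ m : M,
      phiLR *
          (TensorProduct.assoc ℂ G M G)
            (TensorProduct.map L.lam.toLinearMap LinearMap.id (R.rho m)) =
        TensorProduct.map LinearMap.id R.rho.toLinearMap (L.lam m) * phiLR)
    (hLR_pentagon1 :
      ((1 : G) ⊗ₜ[ℂ] phiLR) *
          TensorProduct.map LinearMap.id
            ((TensorProduct.assoc ℂ G M G).toLinearMap ∘ₗ
              TensorProduct.map L.lam.toLinearMap LinearMap.id) phiLR *
          TensorProduct.map LinearMap.id (TensorProduct.assoc ℂ G M G).toLinearMap
            ((TensorProduct.assoc ℂ G (G ⊗[ℂ] M) G) (L.phiL ⊗ₜ[ℂ] (1 : G))) =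
        TensorProduct.map LinearMap.id
            (TensorProduct.map LinearMap.id R.rho.toLinearMap) L.phiL *
          (TensorProduct.assoc ℂ G G (M ⊗[ℂ] G))
            (TensorProduct.map Q.comul.toLinearMap LinearMap.id phiLR))
    (hLR_pentagon2 :
      ((1 : G) ⊗ₜ[ℂ] R.phiR) *
          TensorProduct.map LinearMap.id
            ((TensorProduct.assoc ℂ M G G).toLinearMap ∘ₗ
              TensorProduct.map R.rho.toLinearMap LinearMap.id) phiLR *
          TensorProduct.map LinearMap.id (TensorProduct.assoc ℂ M G G).toLinearMap
            ((TensorProduct.assoc ℂ G (M ⊗[ℂ] G) G) (phiLR ⊗ₜ[ℂ] (1 : G))) =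
        TensorProduct.map LinearMap.id
            (TensorProduct.map LinearMap.id Q.comul.toLinearMap) phiLR *
          (TensorProduct.assoc ℂ G M (G ⊗[ℂ] G))
            (TensorProduct.map L.lam.toLinearMap LinearMap.id R.phiR))
    -- the algebra map `γ : M → A` and the `λρ`-intertwiner `T`
    (γ : M →ₐ[ℂ] A) (T : G ⊗[ℂ] A)
    (hT : ∀ m : M,
      T * TensorProduct.map LinearMap.id γ.toLinearMap (L.lam m) =
        (TensorProduct.comm ℂ A G)
            (TensorProduct.map γ.toLinearMap LinearMap.id (R.rho m)) * T) :
    ∀ m : M,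
      coherB Q L R phiLRInv γ T *
          (TensorProduct.assoc ℂ G G A)
            (TensorProduct.map Q.comul.toLinearMap LinearMap.id
              (TensorProduct.map LinearMap.id γ.toLinearMap (L.lam m))) =
        (TensorProduct.assoc ℂ G G A)
            (TensorProduct.map Q.comul.toLinearMap LinearMap.id
              ((TensorProduct.comm ℂ A G)
                (TensorProduct.map γ.toLinearMap LinearMap.id (R.rho m)))) *
          coherB Q L R phiLRInv γ T := by
  
  intro m
  -- linear-map versions of `λ_A` and `ρ_A^op`
  have hT' : ∀ m' : M,
      T * (TensorProduct.map LinearMap.id γ.toLinearMap ∘ₗ L.lam.toLinearMap) m' =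
        ((TensorProduct.map LinearMap.id γ.toLinearMap ∘ₗ (TensorProduct.comm ℂ M G).toLinearMap)
            ∘ₗ R.rho.toLinearMap) m' * T := by
    intro m'
    have h := hT m'
    have e := commNat (γ.toLinearMap) (R.rho m')
    simp only [LinearMap.comp_apply, AlgHom.toLinearMap_apply, LinearEquiv.coe_coe] at h e ⊢
    rw [h, e]
  -- Step 1 : push through `(φ_λ)_A`
  have h1 : TensorProduct.map LinearMap.id (TensorProduct.map LinearMap.id γ.toLinearMap) L.phiL *
      (TensorProduct.assoc ℂ G G A)
        (TensorProduct.map Q.comul.toLinearMap LinearMap.id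
          (TensorProduct.map LinearMap.id γ.toLinearMap (L.lam m))) =
      TensorProduct.map LinearMap.id
          (TensorProduct.map LinearMap.id γ.toLinearMap ∘ₗ L.lam.toLinearMap) (L.lam m) *
        TensorProduct.map LinearMap.id (TensorProduct.map LinearMap.id γ.toLinearMap) L.phiL := by
    have key : TensorProduct.map LinearMap.id (TensorProduct.map LinearMap.id γ.toLinearMap)
          (TensorProduct.map LinearMap.id L.lam.toLinearMap (L.lam m) * L.phiL) =
        TensorProduct.map LinearMap.id (TensorProduct.map LinearMap.id γ.toLinearMap)
          (L.phiL *
            (TensorProduct.assoc ℂ G G M)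
              (TensorProduct.map Q.comul.toLinearMap LinearMap.id (L.lam m))) := by
      rw [L.intertwine m]
    rw [psi1_mul, psi1_mul] at key
    rw [map_id_comp, assocNat] at key
    exact key.symm
  -- Step 2 : push through `T²³`
  have h2 := step2_lemma T
    (TensorProduct.map LinearMap.id γ.toLinearMap ∘ₗ L.lam.toLinearMap)
    ((TensorProduct.map LinearMap.id γ.toLinearMap ∘ₗ (TensorProduct.comm ℂ M G).toLinearMap)
        ∘ₗ R.rho.toLinearMap) hT' (L.lam m)
  -- Step 3 : push through `(φ_λρ⁻¹)¹³²_A`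
  have h3 : TensorProduct.map LinearMap.id
        (TensorProduct.map LinearMap.id γ.toLinearMap ∘ₗ (TensorProduct.comm ℂ M G).toLinearMap)
        phiLRInv *
      TensorProduct.map LinearMap.id
        ((TensorProduct.map LinearMap.id γ.toLinearMap ∘ₗ (TensorProduct.comm ℂ M G).toLinearMap)
            ∘ₗ R.rho.toLinearMap) (L.lam m) =
      sigma23 (TensorProduct.map
          (TensorProduct.map LinearMap.id γ.toLinearMap ∘ₗ L.lam.toLinearMap)
          LinearMap.id (R.rho m)) *
        TensorProduct.map LinearMap.id
          (TensorProduct.map LinearMap.id γ.toLinearMap ∘ₗ (TensorProduct.comm ℂ M G).toLinearMap)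
          phiLRInv := by
    have hinv := inv_swap phiLR phiLRInv
      ((TensorProduct.assoc ℂ G M G)
        (TensorProduct.map L.lam.toLinearMap LinearMap.id (R.rho m)))
      (TensorProduct.map LinearMap.id R.rho.toLinearMap (L.lam m))
      hLR_mul_inv hLR_inv_mul (hLR_intertwine m)
    have key : TensorProduct.map LinearMap.id
          (TensorProduct.map LinearMap.id γ.toLinearMap ∘ₗ (TensorProduct.comm ℂ M G).toLinearMap)
          (phiLRInv * TensorProduct.map LinearMap.id R.rho.toLinearMap (L.lam m)) =
        TensorProduct.map LinearMap.id
          (TensorProduct.map LinearMap.id γ.toLinearMap ∘ₗ (TensorProduct.comm ℂ M G).toLinearMap)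
          ((TensorProduct.assoc ℂ G M G)
              (TensorProduct.map L.lam.toLinearMap LinearMap.id (R.rho m)) * phiLRInv) := by
      rw [hinv]
    rw [psi3_mul, psi3_mul] at key
    rw [map_id_comp, eX4_lemma] at key
    exact key
  -- Step 4 : push through `T¹³`
  have h4 := step4_lemma T
    (TensorProduct.map LinearMap.id γ.toLinearMap ∘ₗ L.lam.toLinearMap)
    ((TensorProduct.map LinearMap.id γ.toLinearMap ∘ₗ (TensorProduct.comm ℂ M G).toLinearMap)
        ∘ₗ R.rho.toLinearMap) hT' (R.rho m)
  -- Step 5 : push through `(φ_ρ³¹²)_A`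
  have h5 : TensorProduct.map LinearMap.id (TensorProduct.map LinearMap.id γ.toLinearMap)
        ((TensorProduct.assoc ℂ G G M) ((TensorProduct.comm ℂ M (G ⊗[ℂ] G)) R.phiR)) *
      sigma23 (TensorProduct.map
          ((TensorProduct.map LinearMap.id γ.toLinearMap ∘ₗ (TensorProduct.comm ℂ M G).toLinearMap)
              ∘ₗ R.rho.toLinearMap) LinearMap.id (R.rho m)) =
      (TensorProduct.assoc ℂ G G A)
          (TensorProduct.map Q.comul.toLinearMap LinearMap.id
            (TensorProduct.map LinearMap.id γ.toLinearMap ((TensorProduct.comm ℂ M G) (R.rho m)))) *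
        TensorProduct.map LinearMap.id (TensorProduct.map LinearMap.id γ.toLinearMap)
          ((TensorProduct.assoc ℂ G G M) ((TensorProduct.comm ℂ M (G ⊗[ℂ] G)) R.phiR)) := by
    have key : TensorProduct.map LinearMap.id (TensorProduct.map LinearMap.id γ.toLinearMap)
          ((TensorProduct.assoc ℂ G G M) ((TensorProduct.comm ℂ M (G ⊗[ℂ] G))
            (R.phiR * (TensorProduct.assoc ℂ M G G)
              (TensorProduct.map R.rho.toLinearMap LinearMap.id (R.rho m))))) =
        TensorProduct.map LinearMap.id (TensorProduct.map LinearMap.id γ.toLinearMap)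
          ((TensorProduct.assoc ℂ G G M) ((TensorProduct.comm ℂ M (G ⊗[ℂ] G))
            (TensorProduct.map LinearMap.id Q.comul.toLinearMap (R.rho m) * R.phiR))) := by
      rw [R.intertwine m]
    rw [psi5_mul, psi5_mul] at key
    rw [eX5_lemma, eXrho_lemma] at key
    exact key
  unfold coherB
  rw [commNat γ.toLinearMap (R.rho m)]
  exact chain5 _ _ _ _ _ _ _ _ _ _ _ h1 h2 h3 h4 h5
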